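/- arXiv:1706.08027 — 3 statements merged into one kernel-verified Lean document; each statement's English description precedes it below -/
import Mathlib

section
/- Compactification commutes with deletion and contraction up to compactification: for a 2-polymatroid P = (E, r) and A ⊆ E, one has (P^♭ \ A)^♭ = (P \ A)^♭ and (P^♭ / A)^♭ = (P / A)^♭. -/
/-!
`P^♭` differs from `P` by the modular function `X ↦ Σ_{x ∈ X} [r(E - x) - r(E)]`, and this
survives deletion and contraction of `A` (restricted to subsets of `E - A`). Compactifying
a set function is blind to adding a modular function `w`: the shift `Σ_{x ∈ X} w x` is
cancelled exactly by the change `-w x` of each correction term `s(F - x) - s(F)`.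
-/

/-- The compactification rank function of a polymatroid with ground set `F`
and rank function `s`: `s^♭(X) = s(X) + Σ_{x ∈ X} [s(F \ {x}) - s(F)]`. -/
def flatRank {α : Type*} [DecidableEq α] (F : Finset α) (s : Finset α → ℤ)
    (X : Finset α) : ℤ :=
  s X + ∑ x ∈ X, (s (F \ {x}) - s F)

section

variable {α : Type*} [DecidableEq α]

theorem flatRank_congr {F X : Finset α} {s t : Finset α → ℤ}
    (hst : ∀ Y ⊆ F, s Y = t Y) (hX : X ⊆ F) :
    flatRank F s X = flatRank F t X := by
  unfold flatRank
  rw [hst X hX, hst F subset_rfl]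
  refine congrArg _ (Finset.sum_congr rfl fun x _ => ?_)
  rw [hst _ Finset.sdiff_subset]

theorem flatRank_add_sum {F X : Finset α} (s : Finset α → ℤ) (w : α → ℤ) (hX : X ⊆ F) :
    flatRank F (fun Y => s Y + ∑ y ∈ Y, w y) X = flatRank F s X := by
  have hcorr : ∀ x ∈ X, (s (F \ {x}) + ∑ y ∈ F \ {x}, w y) - (s F + ∑ y ∈ F, w y)
      = (s (F \ {x}) - s F) - w x := by
    intro x hx
    rw [Finset.sdiff_singleton_eq_erase, Finset.sum_erase_eq_sub (hX hx)]
    ring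
  simp only [flatRank, Finset.sum_congr rfl hcorr, Finset.sum_sub_distrib]
  ring

theorem flatRank_union_sub_flatRank {E A Y : Finset α} (r : Finset α → ℤ)
    (hYA : Disjoint Y A) :
    flatRank E r (Y ∪ A) - flatRank E r A
      = (r (Y ∪ A) - r A) + ∑ y ∈ Y, (r (E \ {y}) - r E) := by
  simp only [flatRank, Finset.sum_union hYA]
  ring

end

theorem flat_del_flat_and_flat_con_flat_general {α : Type*} [DecidableEq α]
    (E : Finset α) (r : Finset α → ℤ)
    (A : Finset α) :
    (∀ X : Finset α, X ⊆ E \ A →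
      flatRank (E \ A) (fun Y => flatRank E r Y) X = flatRank (E \ A) r X) ∧
    (∀ X : Finset α, X ⊆ E \ A →
      flatRank (E \ A) (fun Y => flatRank E r (Y ∪ A) - flatRank E r A) X
        = flatRank (E \ A) (fun Y => r (Y ∪ A) - r A) X) := by
  refine ⟨fun X hX => flatRank_add_sum r _ hX, fun X hX => ?_⟩
  rw [flatRank_congr (fun Y hY => flatRank_union_sub_flatRank r
    (Finset.disjoint_of_subset_left hY Finset.sdiff_disjoint)) hX]
  exact flatRank_add_sum _ _ hX

/-- Compactification commutes with deletion and contraction up to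
compactification: `(P^♭ \ A)^♭ = (P \ A)^♭` and `(P^♭ / A)^♭ = (P / A)^♭`
for a 2-polymatroid `P = (E, r)` and `A ⊆ E`. -/
theorem flat_del_flat_and_flat_con_flat {α : Type*} [DecidableEq α]
    (E : Finset α) (r : Finset α → ℤ)
    (hr0 : r ∅ = 0)
    (hmono : ∀ X Y : Finset α, X ⊆ Y → Y ⊆ E → r X ≤ r Y)
    (hsubmod : ∀ X Y : Finset α, X ⊆ E → Y ⊆ E →
      r (X ∪ Y) + r (X ∩ Y) ≤ r X + r Y)
    (h2 : ∀ e ∈ E, r {e} ≤ 2)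
    (A : Finset α) (hA : A ⊆ E) :
    (∀ X : Finset α, X ⊆ E \ A →
      flatRank (E \ A) (fun Y => flatRank E r Y) X = flatRank (E \ A) r X) ∧
    (∀ X : Finset α, X ⊆ E \ A →
      flatRank (E \ A) (fun Y => flatRank E r (Y ∪ A) - flatRank E r A) X
        = flatRank (E \ A) (fun Y => r (Y ∪ A) - r A) X) :=
  flat_del_flat_and_flat_con_flat_general E r A
end

section
/- Compactified deletion and contraction commute: for disjoint subsets A, B of the ground set of a 2-polymatroid P, one has (P/A \ B)^♭ = (P \ B)^♭ / A (i.e., P/A ⧹⧹ B = P ⧹⧹ B / A, where ⧹⧹ denotes deletion followed by compactification). -/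
namespace Finset

variable {α : Type*} [DecidableEq α]

theorem sdiff_singleton_union_of_notMem {s t : Finset α} {a : α} (ha : a ∉ t) :
    s \ {a} ∪ t = (s ∪ t) \ {a} := by
  ext x
  by_cases hx : x = a <;> simp_all

theorem sdiff_sdiff_union_of_subset_of_disjoint {s t u : Finset α} (hts : t ⊆ s)
    (htu : Disjoint t u) : (s \ t) \ u ∪ t = s \ u := by
  ext x
  by_cases hx : x ∈ t
  · simp [hx, hts hx, disjoint_left.mp htu hx]
  · simp [hx]

end Finset

theorem flatRank_contract {α : Type*} [DecidableEq α] (F A X : Finset α) (s : Finset α → ℤ)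
    (hXA : Disjoint X A) :
    flatRank F (fun Y => s (Y ∪ A) - s A) X
      = flatRank (F ∪ A) s (X ∪ A) - flatRank (F ∪ A) s A := by
  have hterm : ∀ x ∈ X, s (F \ {x} ∪ A) - s A - (s (F ∪ A) - s A)
      = s ((F ∪ A) \ {x}) - s (F ∪ A) := fun x hx => by
    rw [Finset.sdiff_singleton_union_of_notMem (Finset.disjoint_left.mp hXA hx)]
    ring
  simp only [flatRank, Finset.sum_union hXA, Finset.sum_congr rfl hterm]
  ring

theorem compactified_del_con_commute_general {α : Type*} [DecidableEq α]
    (E : Finset α) (r : Finset α → ℤ)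
    (A B : Finset α) (hA : A ⊆ E) (hAB : Disjoint A B) :
    ∀ X : Finset α, X ⊆ (E \ A) \ B →
      flatRank ((E \ A) \ B) (fun Y => r (Y ∪ A) - r A) X
        = flatRank (E \ B) r (X ∪ A) - flatRank (E \ B) r A := by
  intro X hX
  have hXA : Disjoint X A :=
    Finset.disjoint_of_subset_left (hX.trans Finset.sdiff_subset) Finset.sdiff_disjoint
  rw [flatRank_contract _ _ _ _ hXA, Finset.sdiff_sdiff_union_of_subset_of_disjoint hA hAB]

/-- Compactified deletion and contraction commute: for disjoint subsets
`A, B` of the ground set of a 2-polymatroid `P`,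
`P/A ⧹⧹ B = P ⧹⧹ B / A`, where `⧹⧹` is deletion followed by compactification. -/
theorem compactified_del_con_commute {α : Type*} [DecidableEq α]
    (E : Finset α) (r : Finset α → ℤ)
    (hr0 : r ∅ = 0)
    (hmono : ∀ X Y : Finset α, X ⊆ Y → Y ⊆ E → r X ≤ r Y)
    (hsubmod : ∀ X Y : Finset α, X ⊆ E → Y ⊆ E →
      r (X ∪ Y) + r (X ∩ Y) ≤ r X + r Y)
    (h2 : ∀ e ∈ E, r {e} ≤ 2)
    (A B : Finset α) (hA : A ⊆ E) (hB : B ⊆ E) (hAB : Disjoint A B) :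
    ∀ X : Finset α, X ⊆ (E \ A) \ B →
      flatRank ((E \ A) \ B) (fun Y => r (Y ∪ A) - r A) X
        = flatRank (E \ B) r (X ∪ A) - flatRank (E \ B) r A :=
  compactified_del_con_commute_general E r A B hA hAB
end

section
/- For disjoint subsets X and Y of the ground set of a polymatroid M, the local connectivity in the dual satisfies ⊓_{M*}(X, Y) = ⊓_{M/(E − (X ∪ Y))}(X, Y). -/
/-! Both sides equal `r(E \ X) + r(E \ Y) - r(E \ (X ∪ Y)) - r(E)`: in the dual the singleton
sums cancel because `X` and `Y` are disjoint, and in the contraction the sets `X ∪ (E \ (X ∪ Y))`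
and `Y ∪ (E \ (X ∪ Y))` are just `E \ Y` and `E \ X`. -/

/-- The dual rank function `r*(Z) = Σ_{e ∈ Z} r({e}) + r(E \ Z) - r(E)`. -/
def dualRank {α : Type*} [DecidableEq α] (E : Finset α) (r : Finset α → ℤ)
    (Z : Finset α) : ℤ :=
  (∑ e ∈ Z, r {e}) + r (E \ Z) - r E

namespace Finset

variable {α : Type*} [DecidableEq α]

theorem union_sdiff_union_eq_sdiff {E X Y : Finset α} (hX : X ⊆ E) (hXY : Disjoint X Y) :
    X ∪ (E \ (X ∪ Y)) = E \ Y := by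
  rw [union_comm X Y, show E \ (Y ∪ X) = (E \ Y) \ X from sdiff_sdiff_left.symm]
  exact union_sdiff_of_subset (subset_sdiff.mpr ⟨hX, hXY⟩)

end Finset

theorem dualRank_add_dualRank_sub_dualRank_union {α : Type*} [DecidableEq α]
    (E : Finset α) (r : Finset α → ℤ) {X Y : Finset α} (hXY : Disjoint X Y) :
    dualRank E r X + dualRank E r Y - dualRank E r (X ∪ Y)
      = r (E \ X) + r (E \ Y) - r (E \ (X ∪ Y)) - r E := by
  simp only [dualRank, Finset.sum_union hXY]
  ring

theorem dual_localConn_eq_contract_localConn_general {α : Type*} [DecidableEq α]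
    (E : Finset α) (r : Finset α → ℤ)
    (X Y : Finset α) (hX : X ⊆ E) (hY : Y ⊆ E) (hXY : Disjoint X Y) :
    dualRank E r X + dualRank E r Y - dualRank E r (X ∪ Y)
      = (r (X ∪ (E \ (X ∪ Y))) - r (E \ (X ∪ Y)))
        + (r (Y ∪ (E \ (X ∪ Y))) - r (E \ (X ∪ Y)))
        - (r ((X ∪ Y) ∪ (E \ (X ∪ Y))) - r (E \ (X ∪ Y))) := by
  have hYc : Y ∪ (E \ (X ∪ Y)) = E \ X := by
    rw [Finset.union_comm X Y]
    exact Finset.union_sdiff_union_eq_sdiff hY hXY.symm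
  rw [dualRank_add_dualRank_sub_dualRank_union E r hXY,
    Finset.union_sdiff_union_eq_sdiff hX hXY, hYc,
    Finset.union_sdiff_of_subset (Finset.union_subset hX hY)]
  ring

/-- For disjoint subsets `X` and `Y` of the ground set of a polymatroid `M`,
`⊓_{M*}(X, Y) = ⊓_{M/(E \ (X ∪ Y))}(X, Y)`. -/
theorem dual_localConn_eq_contract_localConn {α : Type*} [DecidableEq α]
    (E : Finset α) (r : Finset α → ℤ)
    (hr0 : r ∅ = 0)
    (hmono : ∀ X Y : Finset α, X ⊆ Y → Y ⊆ E → r X ≤ r Y)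
    (hsubmod : ∀ X Y : Finset α, X ⊆ E → Y ⊆ E →
      r (X ∪ Y) + r (X ∩ Y) ≤ r X + r Y)
    (X Y : Finset α) (hX : X ⊆ E) (hY : Y ⊆ E) (hXY : Disjoint X Y) :
    dualRank E r X + dualRank E r Y - dualRank E r (X ∪ Y)
      = (r (X ∪ (E \ (X ∪ Y))) - r (E \ (X ∪ Y)))
        + (r (Y ∪ (E \ (X ∪ Y))) - r (E \ (X ∪ Y)))
        - (r ((X ∪ Y) ∪ (E \ (X ∪ Y))) - r (E \ (X ∪ Y))) :=
  dual_localConn_eq_contract_localConn_general E r X Y hX hY hXY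
end
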